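/- arXiv:1902.01520 — 2 statements merged into one kernel-verified Lean document; each statement's English description precedes it below -/
import Mathlib

section
/- Let $\nu$ be a measure on a measurable space, let $S_1, S_2$ be measurable sets with $0 < \nu(S_1) < \infty$ and $0 < \nu(S_2) < \infty$, and let $\ell$ be a measurable function with values in $[0,1]$. Then $\left| \frac{\int_{S_1} \ell \, d\nu}{\nu(S_1)} - \frac{\int_{S_2} \ell \, d\nu}{\nu(S_2)} \right| \le \frac{2\, \nu(S_1 \triangle S_2)}{\max(\nu(S_1), \nu(S_2))}$. -/
open MeasureTheory

lemma avg_key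
    {Ω : Type*} [MeasurableSpace Ω] (ν : Measure Ω)
    (S₁ S₂ : Set Ω) (hS₁ : MeasurableSet S₁) (hS₂ : MeasurableSet S₂)
    (h₁ : 0 < ν S₁) (h₁' : ν S₁ < ⊤) (h₂ : 0 < ν S₂) (h₂' : ν S₂ < ⊤)
    (hle : ν S₂ ≤ ν S₁)
    (ℓ : Ω → ℝ) (hmeas : Measurable ℓ) (hrange : ∀ x, ℓ x ∈ Set.Icc (0:ℝ) 1) :
    |(∫ x in S₁, ℓ x ∂ν) / (ν S₁).toReal - (∫ x in S₂, ℓ x ∂ν) / (ν S₂).toReal|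
      ≤ 2 * (ν (symmDiff S₁ S₂)).toReal / (ν S₁).toReal := by
  have hdfin : ν (symmDiff S₁ S₂) < ⊤ :=
    lt_of_le_of_lt (le_trans (measure_mono Set.symmDiff_subset_union)
      (measure_union_le S₁ S₂)) (ENNReal.add_lt_top.2 ⟨h₁', h₂'⟩)
  set a := (ν S₁).toReal with ha
  set b := (ν S₂).toReal with hb
  set d := (ν (symmDiff S₁ S₂)).toReal with hd
  have ha0 : 0 < a := ENNReal.toReal_pos h₁.ne' h₁'.ne
  have hb0 : 0 < b := ENNReal.toReal_pos h₂.ne' h₂'.ne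
  have hba : b ≤ a := ENNReal.toReal_mono h₁'.ne hle
  have hd0 : 0 ≤ d := ENNReal.toReal_nonneg
  have hbound : ∀ᵐ x ∂ν, ‖ℓ x‖ ≤ 1 := by
    filter_upwards with x
    rw [Real.norm_eq_abs, abs_le]
    exact ⟨le_trans (by norm_num) (hrange x).1, (hrange x).2⟩
  have hint : ∀ S : Set Ω, ν S < ⊤ → IntegrableOn ℓ S ν := fun S hS =>
    Measure.integrableOn_of_bounded hS.ne hmeas.aestronglyMeasurable (ae_restrict_of_ae hbound)
  -- bounds on set integrals
  have hIb : ∀ S : Set Ω, ν S < ⊤ → 0 ≤ ∫ x in S, ℓ x ∂ν ∧ (∫ x in S, ℓ x ∂ν) ≤ (ν S).toReal := by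
    intro S hS
    constructor
    · exact setIntegral_nonneg_of_ae_restrict (by filter_upwards with x using (hrange x).1)
    · calc (∫ x in S, ℓ x ∂ν) ≤ ‖∫ x in S, ℓ x ∂ν‖ := le_abs_self _
        _ ≤ 1 * (ν S).toReal := by
            refine norm_setIntegral_le_of_norm_le_const hS ?_
            intro x _
            rw [Real.norm_eq_abs, abs_le]
            exact ⟨le_trans (by norm_num) (hrange x).1, (hrange x).2⟩
        _ = (ν S).toReal := one_mul _
  have hfin12 : ν (S₁ \ S₂) < ⊤ := lt_of_le_of_lt (measure_mono Set.diff_subset) h₁'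
  have hfin21 : ν (S₂ \ S₁) < ⊤ := lt_of_le_of_lt (measure_mono Set.diff_subset) h₂'
  have hd12 : (ν (S₁ \ S₂)).toReal ≤ d :=
    ENNReal.toReal_mono hdfin.ne (measure_mono (by rw [Set.symmDiff_def]; exact Set.subset_union_left))
  have hd21 : (ν (S₂ \ S₁)).toReal ≤ d :=
    ENNReal.toReal_mono hdfin.ne (measure_mono (by rw [Set.symmDiff_def]; exact Set.subset_union_right))
  -- |I - J| ≤ d
  have hsplit1 : (∫ x in S₁ ∩ S₂, ℓ x ∂ν) + ∫ x in S₁ \ S₂, ℓ x ∂ν = ∫ x in S₁, ℓ x ∂ν :=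
    integral_inter_add_diff hS₂ (hint S₁ h₁')
  have hsplit2 : (∫ x in S₂ ∩ S₁, ℓ x ∂ν) + ∫ x in S₂ \ S₁, ℓ x ∂ν = ∫ x in S₂, ℓ x ∂ν :=
    integral_inter_add_diff hS₁ (hint S₂ h₂')
  have hIJ : |(∫ x in S₁, ℓ x ∂ν) - ∫ x in S₂, ℓ x ∂ν| ≤ d := by
    rw [← hsplit1, ← hsplit2, Set.inter_comm S₂ S₁]
    have e1 := hIb (S₁ \ S₂) hfin12
    have e2 := hIb (S₂ \ S₁) hfin21
    rw [abs_le]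
    constructor <;> nlinarith [e1.1, e1.2, e2.1, e2.2, hd12, hd21]
  -- a - b ≤ d
  have hab : a - b ≤ d := by
    have : ν S₁ ≤ ν S₂ + ν (S₁ \ S₂) := by
      calc ν S₁ ≤ ν (S₂ ∪ (S₁ \ S₂)) := measure_mono (fun x hx => by
            by_cases h : x ∈ S₂
            · exact Or.inl h
            · exact Or.inr ⟨hx, h⟩)
        _ ≤ ν S₂ + ν (S₁ \ S₂) := measure_union_le _ _
    have := ENNReal.toReal_mono (by exact (ENNReal.add_lt_top.2 ⟨h₂', hfin12⟩).ne) this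
    rw [ENNReal.toReal_add h₂'.ne hfin12.ne] at this
    linarith
  -- final algebra
  set I := (∫ x in S₁, ℓ x ∂ν) with hI
  set J := (∫ x in S₂, ℓ x ∂ν) with hJ
  have hJb := hIb S₂ h₂'
  have key : I / a - J / b = (I - J) / a + (J / b) * ((b - a) / a) := by
    field_simp
    ring
  rw [key]
  have h1 : |(I - J) / a| ≤ d / a := by
    rw [abs_div, abs_of_pos ha0]
    exact div_le_div_of_nonneg_right hIJ ha0.le |>.trans_eq rfl
  have h2 : |(J / b) * ((b - a) / a)| ≤ d / a := by
    rw [abs_mul]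
    have hJb1 : |J / b| ≤ 1 := by
      rw [abs_div, abs_of_pos hb0, div_le_one hb0]
      rw [abs_le]; exact ⟨by linarith [hJb.1], hJb.2⟩
    have : |(b - a) / a| ≤ d / a := by
      rw [abs_div, abs_of_pos ha0, abs_sub_comm, abs_of_nonneg (by linarith)]
      exact div_le_div_of_nonneg_right hab ha0.le |>.trans_eq rfl
    calc |J / b| * |(b - a) / a| ≤ 1 * (d / a) :=
          mul_le_mul hJb1 this (abs_nonneg _) zero_le_one
      _ = d / a := one_mul _
  calc |(I - J) / a + (J / b) * ((b - a) / a)| ≤ |(I - J) / a| + |(J / b) * ((b - a) / a)| := abs_add_le _ _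
    _ ≤ d / a + d / a := add_le_add h1 h2
    _ = 2 * d / a := by ring

theorem avg_diff_two_sets
    {Ω : Type*} [MeasurableSpace Ω] (ν : Measure Ω)
    (S₁ S₂ : Set Ω) (hS₁ : MeasurableSet S₁) (hS₂ : MeasurableSet S₂)
    (h₁ : 0 < ν S₁) (h₁' : ν S₁ < ⊤) (h₂ : 0 < ν S₂) (h₂' : ν S₂ < ⊤)
    (ℓ : Ω → ℝ) (hmeas : Measurable ℓ) (hrange : ∀ x, ℓ x ∈ Set.Icc (0:ℝ) 1) :
    |(∫ x in S₁, ℓ x ∂ν) / (ν S₁).toReal - (∫ x in S₂, ℓ x ∂ν) / (ν S₂).toReal|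
      ≤ 2 * (ν (symmDiff S₁ S₂)).toReal / max (ν S₁).toReal (ν S₂).toReal := by
  rcases le_total (ν S₂) (ν S₁) with h | h
  · rw [max_eq_left (ENNReal.toReal_mono h₁'.ne h)]
    exact avg_key ν S₁ S₂ hS₁ hS₂ h₁ h₁' h₂ h₂' h ℓ hmeas hrange
  · rw [max_eq_right (ENNReal.toReal_mono h₂'.ne h), abs_sub_comm, symmDiff_comm]
    exact avg_key ν S₂ S₁ hS₂ hS₁ h₂ h₂' h₁ h₁' h ℓ hmeas hrange
end

section
/- Let $X_1,\dots,X_n$ be i.i.d. real random variables with mean $\mu$ and variance $\sigma^2$, let $\delta\in(0,1)$, $k = 5\lceil \ln(1/\delta)\rceil$, and suppose $n = k\tilde{n}$ for an integer $\tilde{n}\ge 1$. Let $\hat{\mu}$ be the median of the $k$ block means $\frac{1}{\tilde{n}}\sum_{i=(j-1)\tilde{n}+1}^{j\tilde{n}} X_i$ for $j=1,\dots,k$. Then with probability at least $1-\delta$, $|\hat{\mu} - \mu| \le \sigma\sqrt{\frac{40\ln(e/\delta)}{n}}$. -/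
open MeasureTheory ProbabilityTheory

/-- The median of `k` real numbers (an element of rank `k / 2` in sorted order). -/
noncomputable def medianOf {k : ℕ} (v : Fin k → ℝ) : ℝ :=
  ((List.ofFn v).mergeSort (· ≤ ·)).getD (k / 2) 0

lemma medianOf_const {k : ℕ} (hk : 0 < k) (c : ℝ) : medianOf (fun _ : Fin k => c) = c := by
  have h1 : (List.ofFn fun _ : Fin k => c) = List.replicate k c := List.ofFn_const _ _
  have h2 : (List.ofFn fun _ : Fin k => c).mergeSort (· ≤ ·) = List.replicate k c := by
    apply List.eq_replicate_iff.2
    constructor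
    · rw [List.length_mergeSort, h1, List.length_replicate]
    · intro b hb
      have := (List.mergeSort_perm (List.ofFn fun _ : Fin k => c) _).mem_iff.1 hb
      rw [h1] at this
      exact List.eq_of_mem_replicate this
  rw [medianOf, h2]
  rw [List.getD_eq_getElem?_getD, List.getElem?_replicate]
  simp [Nat.div_lt_self hk]

lemma card_filter_eq_countP {k : ℕ} (v : Fin k → ℝ) (p : ℝ → Prop) [DecidablePred p] :
    ((Finset.univ : Finset (Fin k)).filter (fun j => p (v j))).card =
      (List.ofFn v).countP (fun x => decide (p x)) := by
  rw [List.ofFn_eq_map, List.countP_map]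
  rw [Finset.card_def, Finset.filter_val, Fin.univ_def]
  simp only [Multiset.filter_coe, Multiset.coe_card, List.countP_eq_length_filter]
  rfl

lemma card_bad_of_median {k : ℕ} (hk : 0 < k) (v : Fin k → ℝ) (μ ε : ℝ)
    (h : ε < |medianOf v - μ|) :
    k - k / 2 ≤ (Finset.univ.filter (fun j : Fin k => ε < |v j - μ|)).card := by
  classical
  set L := (List.ofFn v).mergeSort (· ≤ ·) with hL
  have hlen : L.length = k := by rw [hL, List.length_mergeSort, List.length_ofFn]
  have hsort : L.Pairwise (· ≤ ·) := List.pairwise_mergeSort' (fun a b : ℝ => a ≤ b) _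
  have hperm : L.Perm (List.ofFn v) := List.mergeSort_perm _ _
  have hklt : k / 2 < k := Nat.div_lt_self hk one_lt_two
  have hlt : k / 2 < L.length := by rw [hlen]; exact hklt
  have hmed : medianOf v = L[k / 2] := by
    rw [medianOf, ← hL, List.getD_eq_getElem?_getD, List.getElem?_eq_getElem hlt]
    rfl
  rw [card_filter_eq_countP v (fun x => ε < |x - μ|)]
  rw [← hperm.countP_eq]
  rw [hmed] at h
  have key : ∀ M : List ℝ, (∀ a ∈ M, ε < |a - μ|) →
      M.length ≤ L.countP (fun x => decide (ε < |x - μ|)) → True := fun _ _ _ => trivial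
  rcases lt_abs.1 h with h1 | h1
  · -- median is large
    have hall : ∀ a ∈ L.drop (k / 2), ε < |a - μ| := by
      intro a ha
      obtain ⟨i, hi, rfl⟩ := List.mem_iff_getElem.1 ha
      have hlen2 : (L.drop (k / 2)).length = k - k / 2 := by rw [List.length_drop, hlen]
      have h2 : k / 2 + i < L.length := by rw [List.length_drop] at hi; omega
      rw [List.getElem_drop]
      have hle : L.get ⟨k / 2, hlt⟩ ≤ L.get ⟨k / 2 + i, h2⟩ :=
        hsort.rel_get_of_le (Fin.mk_le_mk.2 (by omega))
      simp only [List.get_eq_getElem] at hle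
      refine lt_of_lt_of_le ?_ (le_abs_self _)
      linarith
    calc k - k / 2 = (L.drop (k / 2)).length := by rw [List.length_drop, hlen]
    _ = (L.drop (k / 2)).countP (fun x => decide (ε < |x - μ|)) := by
        rw [List.countP_eq_length.2 (by intro a ha; exact decide_eq_true (hall a ha))]
    _ ≤ (L.take (k / 2)).countP (fun x => decide (ε < |x - μ|)) +
          (L.drop (k / 2)).countP (fun x => decide (ε < |x - μ|)) := Nat.le_add_left _ _
    _ = L.countP (fun x => decide (ε < |x - μ|)) := by
        rw [← List.countP_append, List.take_append_drop]
  · -- median is small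
    have hall : ∀ a ∈ L.take (k / 2 + 1), ε < |a - μ| := by
      intro a ha
      obtain ⟨i, hi, rfl⟩ := List.mem_iff_getElem.1 ha
      have hi2 : i < L.length := by rw [List.length_take] at hi; omega
      have hile : i ≤ k / 2 := by rw [List.length_take] at hi; omega
      rw [List.getElem_take]
      have hle : L.get ⟨i, hi2⟩ ≤ L.get ⟨k / 2, hlt⟩ :=
        hsort.rel_get_of_le (Fin.mk_le_mk.2 (by omega))
      simp only [List.get_eq_getElem] at hle
      rw [abs_sub_comm]
      refine lt_of_lt_of_le ?_ (le_abs_self _)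
      linarith
    have hlen2 : (L.take (k / 2 + 1)).length = k / 2 + 1 := by
      rw [List.length_take, hlen]; omega
    calc k - k / 2 ≤ k / 2 + 1 := by omega
    _ = (L.take (k / 2 + 1)).countP (fun x => decide (ε < |x - μ|)) := by
        rw [List.countP_eq_length.2 (by intro a ha; exact decide_eq_true (hall a ha))]
        exact hlen2.symm
    _ ≤ (L.take (k / 2 + 1)).countP (fun x => decide (ε < |x - μ|)) +
          (L.drop (k / 2 + 1)).countP (fun x => decide (ε < |x - μ|)) := Nat.le_add_right _ _
    _ = L.countP (fun x => decide (ε < |x - μ|)) := by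
        rw [← List.countP_append, List.take_append_drop]

lemma block_inter_prod {Ω : Type*} [MeasurableSpace Ω] (P : Measure Ω) [IsProbabilityMeasure P]
    (X : ℕ → Ω → ℝ) (hindep : iIndepFun X P)
    (hmeas : ∀ i, Measurable (X i)) (m k : ℕ)
    (A : Fin k → Set ℝ) (hA : ∀ j, MeasurableSet (A j)) (S : Finset (Fin k)) :
    P (⋂ j ∈ S, {ω | (∑ i ∈ Finset.range m, X (j.1 * m + i) ω) ∈ A j}) =
      ∏ j ∈ S, P {ω | (∑ i ∈ Finset.range m, X (j.1 * m + i) ω) ∈ A j} := by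
  classical
  induction S using Finset.induction_on with
  | empty => simp
  | @insert j S hj IH =>
    set T1 : Finset ℕ := Finset.Ico (j.1 * m) (j.1 * m + m) with hT1
    set T2 : Finset ℕ := S.biUnion (fun j' => Finset.Ico (j'.1 * m) (j'.1 * m + m)) with hT2
    have hdisj : Disjoint T1 T2 := by
      rw [Finset.disjoint_left]
      intro x hx1 hx2
      rw [hT1, Finset.mem_Ico] at hx1
      rw [hT2, Finset.mem_biUnion] at hx2
      obtain ⟨j', hj'S, hx2⟩ := hx2
      rw [Finset.mem_Ico] at hx2
      have hne : j.1 ≠ j'.1 := by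
        intro hEq
        exact hj (by rwa [show j = j' from Fin.ext hEq])
      rcases Nat.lt_or_ge j.1 j'.1 with hc | hc
      · have : j.1 * m + m ≤ j'.1 * m := by
          calc j.1 * m + m = (j.1 + 1) * m := by ring
          _ ≤ j'.1 * m := Nat.mul_le_mul_right m hc
        omega
      · have hc' : j'.1 < j.1 := by omega
        have : j'.1 * m + m ≤ j.1 * m := by
          calc j'.1 * m + m = (j'.1 + 1) * m := by ring
          _ ≤ j.1 * m := Nat.mul_le_mul_right m hc'
        omega
    have hIF := hindep.indepFun_finset T1 T2 hdisj hmeas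
    -- first coordinate function
    have hmem1 : ∀ i : {x // x ∈ Finset.range m}, j.1 * m + i.1 ∈ T1 := by
      intro i
      have := Finset.mem_range.1 i.2
      rw [hT1, Finset.mem_Ico]
      omega
    set φ1 : ({x // x ∈ T1} → ℝ) → ℝ :=
      fun w => ∑ i ∈ (Finset.range m).attach, w ⟨j.1 * m + i.1, hmem1 i⟩ with hφ1
    have hφ1m : Measurable φ1 :=
      Finset.measurable_sum _ (fun i _ => measurable_pi_apply _)
    set E1 : Set ({x // x ∈ T1} → ℝ) := φ1 ⁻¹' A j with hE1def
    have hE1 : MeasurableSet E1 := hφ1m (hA j)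
    have hpre1 : (fun ω (i : {x // x ∈ T1}) => X i.1 ω) ⁻¹' E1 =
        {ω | (∑ i ∈ Finset.range m, X (j.1 * m + i) ω) ∈ A j} := by
      ext ω
      simp only [Set.mem_preimage, hE1def, hφ1, Set.mem_setOf_eq]
      rw [Finset.sum_attach (Finset.range m) (fun i => X (j.1 * m + i) ω)]
    -- second coordinate function
    have hmem2 : ∀ (j' : Fin k), j' ∈ S → ∀ i : {x // x ∈ Finset.range m},
        j'.1 * m + i.1 ∈ T2 := by
      intro j' hj' i
      have := Finset.mem_range.1 i.2
      rw [hT2, Finset.mem_biUnion]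
      exact ⟨j', hj', Finset.mem_Ico.2 ⟨Nat.le_add_right _ _, by omega⟩⟩
    set E2 : Set ({x // x ∈ T2} → ℝ) :=
      ⋂ (j' : Fin k), ⋂ (h' : j' ∈ S),
        (fun w : {x // x ∈ T2} → ℝ =>
          ∑ i ∈ (Finset.range m).attach, w ⟨j'.1 * m + i.1, hmem2 j' h' i⟩) ⁻¹' A j' with hE2def
    have hE2 : MeasurableSet E2 := by
      apply MeasurableSet.iInter; intro j'
      apply MeasurableSet.iInter; intro h'
      have hmsum : Measurable (fun w : {x // x ∈ T2} → ℝ =>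
          ∑ i ∈ (Finset.range m).attach, w ⟨j'.1 * m + i.1, hmem2 j' h' i⟩) :=
        Finset.measurable_sum _ (fun i _ => measurable_pi_apply _)
      exact hmsum (hA j')
    have hpre2 : (fun ω (i : {x // x ∈ T2}) => X i.1 ω) ⁻¹' E2 =
        ⋂ j' ∈ S, {ω | (∑ i ∈ Finset.range m, X (j'.1 * m + i) ω) ∈ A j'} := by
      ext ω
      simp only [Set.mem_preimage, hE2def, Set.mem_iInter, Set.mem_setOf_eq]
      refine forall_congr' fun j' => forall_congr' fun h' => ?_
      rw [Finset.sum_attach (Finset.range m) (fun i => X (j'.1 * m + i) ω)]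
    rw [Finset.set_biInter_insert, Finset.prod_insert hj, ← IH, ← hpre1, ← hpre2,
      hIF.measure_inter_preimage_eq_mul E1 E2 hE1 hE2]

lemma choose_bound (δ : ℝ) (hδ0 : 0 < δ) (hδ1 : δ < 1) (k r : ℕ)
    (hk : k = 5 * ⌈Real.log (1/δ)⌉₊) (hr : r = k - k/2) :
    (k.choose r : ℝ) * (1/8 : ℝ)^r ≤ δ := by
  have hL0 : 0 < Real.log (1/δ) := Real.log_pos (by rw [lt_div_iff₀ hδ0]; linarith)
  have hkL : 5 * Real.log (1/δ) ≤ (k:ℝ) := by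
    rw [hk]; push_cast
    have := Nat.le_ceil (Real.log (1/δ))
    linarith
  have hrk : r ≤ k := by omega
  have hchoose : (k.choose r : ℝ) ≤ 2^k := by
    have h1 : k.choose r ≤ ∑ i ∈ Finset.range (k+1), k.choose i :=
      Finset.single_le_sum (fun i _ => Nat.zero_le _) (Finset.mem_range.2 (by omega))
    rw [Nat.sum_range_choose] at h1
    exact_mod_cast h1
  have h3rk : k ≤ 3 * r := by omega
  set t : ℕ := 3 * r - k with ht
  have htk : (k:ℝ) ≤ 2 * t := by
    have : 2 * t = 2 * (3 * r) - 2 * k := by omega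
    have h2 : k ≤ 2 * (3*r) - 2*k := by omega
    exact_mod_cast (by omega : k ≤ 2 * t)
  have heq : (2:ℝ)^k * (1/8)^r = (1/2)^t := by
    have h8 : (1/8 : ℝ) = (1/2)^3 := by norm_num
    rw [h8, ← pow_mul]
    have : (1/2 : ℝ)^(3*r) = (1/2)^k * (1/2)^t := by
      rw [← pow_add]; congr 1; omega
    rw [this, ← mul_assoc]
    have : (2:ℝ)^k * (1/2)^k = 1 := by
      rw [one_div, inv_pow, mul_inv_cancel₀ (by positivity)]
    rw [this, one_mul]
  have hhalf : ((1:ℝ)/2)^t ≤ δ := by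
    have hpos : (0:ℝ) < (1/2)^t := by positivity
    rw [← Real.log_le_log_iff hpos hδ0, Real.log_pow]
    have hlog2 : Real.log (1/2) = -Real.log 2 := by
      rw [one_div, Real.log_inv]
    rw [hlog2]
    have hlogδ : Real.log (1/δ) = -Real.log δ := by
      rw [one_div, Real.log_inv]
    have hl2 : (0.6931471803 : ℝ) < Real.log 2 := Real.log_two_gt_d9
    have htge : 5 * Real.log (1/δ) / 2 ≤ (t:ℝ) := by linarith
    nlinarith [hL0]
  calc (k.choose r : ℝ) * (1/8)^r ≤ 2^k * (1/8)^r := by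
        apply mul_le_mul_of_nonneg_right hchoose (by positivity)
    _ = (1/2)^t := heq
    _ ≤ δ := hhalf

lemma block_cheb {Ω : Type*} [MeasurableSpace Ω] (P : Measure Ω) [IsProbabilityMeasure P]
    (X : ℕ → Ω → ℝ)
    (hindep : iIndepFun X P)
    (hident : ∀ i, Measure.map (X i) P = Measure.map (X 0) P)
    (hmeas : ∀ i, Measurable (X i))
    (hL2 : MeasureTheory.MemLp (X 0) 2 P)
    (μ σ : ℝ) (hmean : ∫ ω, X 0 ω ∂P = μ)
    (hvar : variance (X 0) P = σ ^ 2)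
    (m : ℕ) (hm : 0 < m) (j0 : ℕ) (ε : ℝ) (hε : 0 < ε) :
    P {ω | ε < |(m:ℝ)⁻¹ * ∑ i ∈ Finset.range m, X (j0 * m + i) ω - μ|} ≤
      ENNReal.ofReal ((m : ℝ) * σ^2 / ((m : ℝ) * ε)^2) := by
  classical
  set s : Finset ℕ := Finset.Ico (j0 * m) (j0 * m + m) with hs
  have hcard : s.card = m := by rw [hs, Nat.card_Ico]; omega
  have ident : ∀ i, IdentDistrib (X i) (X 0) P P :=
    fun i => ⟨(hmeas i).aemeasurable, (hmeas 0).aemeasurable, hident i⟩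
  have hL2i : ∀ i, MemLp (X i) 2 P := fun i => (ident i).symm.memLp_snd hL2
  have hInt : ∀ i, Integrable (X i) P := fun i => (hL2i i).integrable one_le_two
  have hmeani : ∀ i, ∫ ω, X i ω ∂P = μ := fun i => by rw [(ident i).integral_eq]; exact hmean
  have hvari : ∀ i, variance (X i) P = σ^2 := fun i => by
    rw [(ident i).variance_eq]; exact hvar
  have hYmem : MemLp (∑ i ∈ s, X i) 2 P := memLp_finset_sum' s (fun i _ => hL2i i)
  have hpair : Set.Pairwise ↑s fun i j => IndepFun (X i) (X j) P :=
    fun i _ j _ hij => hindep.indepFun hij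
  have hYvar : variance (∑ i ∈ s, X i) P = m * σ^2 := by
    rw [IndepFun.variance_sum (fun i _ => hL2i i) hpair]
    rw [Finset.sum_congr rfl (fun i _ => hvari i), Finset.sum_const, hcard, nsmul_eq_mul]
  have hYmean : ∫ ω, (∑ i ∈ s, X i) ω ∂P = m * μ := by
    have : ∀ ω, (∑ i ∈ s, X i) ω = ∑ i ∈ s, X i ω := fun ω => Finset.sum_apply _ _ _
    rw [integral_congr_ae (Filter.Eventually.of_forall (fun ω => this ω)),
      integral_finset_sum s (fun i _ => hInt i)]
    rw [Finset.sum_congr rfl (fun i _ => hmeani i), Finset.sum_const, hcard, nsmul_eq_mul]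
  have hc : (0:ℝ) < m * ε := by positivity
  have cheb := meas_ge_le_variance_div_sq hYmem hc
  rw [hYvar] at cheb
  refine le_trans (measure_mono ?_) cheb
  intro ω hω
  simp only [Set.mem_setOf_eq] at hω ⊢
  have hsum : ∑ i ∈ Finset.range m, X (j0 * m + i) ω = (∑ i ∈ s, X i) ω := by
    rw [Finset.sum_apply, hs, Finset.sum_Ico_eq_sum_range, Nat.add_sub_cancel_left]
  rw [hYmean]
  have hm0 : (m:ℝ) ≠ 0 := Nat.cast_ne_zero.2 (by omega)
  have habs : |(∑ i ∈ s, X i) ω - m * μ| = (m:ℝ) * |(m:ℝ)⁻¹ * ∑ i ∈ Finset.range m, X (j0 * m + i) ω - μ| := by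
    rw [← abs_of_pos (show (0:ℝ) < m by positivity), ← abs_mul]
    congr 1
    rw [hsum]
    field_simp
    rw [abs_of_pos (show (0:ℝ) < m by positivity)]
    ring
  rw [habs]
  exact mul_le_mul_of_nonneg_left hω.le (by positivity)

theorem median_of_means
    {Ω : Type*} [MeasurableSpace Ω] (P : Measure Ω) [IsProbabilityMeasure P]
    (X : ℕ → Ω → ℝ)
    (hindep : iIndepFun X P)
    (hident : ∀ i, Measure.map (X i) P = Measure.map (X 0) P)
    (hmeas : ∀ i, Measurable (X i))
    (hL2 : MeasureTheory.MemLp (X 0) 2 P)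
    (μ σ : ℝ) (hmean : ∫ ω, X 0 ω ∂P = μ) (hσ : 0 ≤ σ)
    (hvar : variance (X 0) P = σ ^ 2)
    (δ : ℝ) (hδ : δ ∈ Set.Ioo (0:ℝ) 1)
    (k n m : ℕ) (hk : k = 5 * ⌈Real.log (1 / δ)⌉₊) (hm : 1 ≤ m) (hn : n = k * m) :
    ENNReal.ofReal (1 - δ) ≤
      P {ω | |medianOf (fun j : Fin k =>
          (↑m)⁻¹ * ∑ i ∈ Finset.range m, X (j.1 * m + i) ω) - μ|
        ≤ σ * Real.sqrt (40 * Real.log (Real.exp 1 / δ) / n)} := by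
  classical
  obtain ⟨hδ0, hδ1⟩ := hδ
  have hL0 : 0 < Real.log (1/δ) := Real.log_pos (by rw [lt_div_iff₀ hδ0]; linarith)
  have hkpos : 0 < k := by
    rw [hk]
    have : 0 < ⌈Real.log (1/δ)⌉₊ := Nat.ceil_pos.2 hL0
    omega
  have hmpos : 0 < m := hm
  have hnpos : 0 < n := by rw [hn]; exact Nat.mul_pos hkpos hmpos
  set ε := σ * Real.sqrt (40 * Real.log (Real.exp 1 / δ) / n) with hε
  have hεnn : 0 ≤ ε := mul_nonneg hσ (Real.sqrt_nonneg _)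
  rcases hσ.eq_or_lt with hσ0 | hσpos
  · -- degenerate case : σ = 0, all X i are a.s. equal to μ
    have hvar0 : variance (X 0) P = 0 := by rw [hvar, ← hσ0]; ring
    have hev : evariance (X 0) P = 0 := by
      rw [← hL2.ofReal_variance_eq, hvar0, ENNReal.ofReal_zero]
    have hX0 : X 0 =ᵐ[P] fun _ => μ := by
      have h := (evariance_eq_zero_iff (hmeas 0).aemeasurable).1 hev
      rwa [hmean] at h
    have hXi : ∀ i : ℕ, ∀ᵐ ω ∂P, X i ω = μ := by
      intro i
      rw [ae_iff]
      have hset : {ω | ¬ X i ω = μ} = X i ⁻¹' ({μ}ᶜ) := by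
        ext ω; simp
      rw [hset, ← Measure.map_apply (hmeas i) (measurableSet_singleton μ).compl, hident i,
        Measure.map_apply (hmeas 0) (measurableSet_singleton μ).compl]
      have h0 : P {ω | ¬ X 0 ω = μ} = 0 := by rw [← ae_iff]; exact hX0
      have hset0 : X 0 ⁻¹' ({μ}ᶜ) = {ω | ¬ X 0 ω = μ} := by ext ω; simp
      rw [hset0]; exact h0
    have hCmeas : MeasurableSet (⋂ i : ℕ, X i ⁻¹' {μ}) :=
      MeasurableSet.iInter fun i => (hmeas i) (measurableSet_singleton μ)
    have hCcompl : P ((⋂ i : ℕ, X i ⁻¹' {μ})ᶜ) = 0 := by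
      rw [Set.compl_iInter]
      refine measure_iUnion_null fun i => ?_
      have h := hXi i
      rw [ae_iff] at h
      have : (X i ⁻¹' {μ})ᶜ = {ω | ¬ X i ω = μ} := by ext ω; simp
      rw [this]; exact h
    have hC1 : P (⋂ i : ℕ, X i ⁻¹' {μ}) = 1 :=
      (prob_compl_eq_zero_iff hCmeas).1 hCcompl
    have hCsub : (⋂ i : ℕ, X i ⁻¹' {μ}) ⊆
        {ω | |medianOf (fun j : Fin k =>
          (↑m)⁻¹ * ∑ i ∈ Finset.range m, X (j.1 * m + i) ω) - μ| ≤ ε} := by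
      intro ω hω
      rw [Set.mem_iInter] at hω
      have hωi : ∀ i : ℕ, X i ω = μ := fun i => hω i
      have hVconst : (fun j : Fin k =>
          (↑m : ℝ)⁻¹ * ∑ i ∈ Finset.range m, X (j.1 * m + i) ω) = fun _ => μ := by
        funext j
        rw [Finset.sum_congr rfl (fun i _ => hωi (j.1 * m + i)), Finset.sum_const,
          Finset.card_range, nsmul_eq_mul]
        field_simp
      show |medianOf (fun j : Fin k =>
          (↑m : ℝ)⁻¹ * ∑ i ∈ Finset.range m, X (j.1 * m + i) ω) - μ| ≤ ε
      rw [hVconst, medianOf_const hkpos, sub_self, abs_zero]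
      exact hεnn
    calc ENNReal.ofReal (1 - δ) ≤ 1 := ENNReal.ofReal_le_one.2 (by linarith)
    _ = P (⋂ i : ℕ, X i ⁻¹' {μ}) := hC1.symm
    _ ≤ _ := measure_mono hCsub
  · -- main case : σ > 0
    have hLq : Real.log (Real.exp 1 / δ) = 1 - Real.log δ := by
      rw [Real.log_div (Real.exp_ne_zero 1) (ne_of_gt hδ0), Real.log_exp]
    have hlogδ : Real.log (1/δ) = -Real.log δ := by rw [one_div, Real.log_inv]
    have hLqpos : 0 < Real.log (Real.exp 1 / δ) := by
      have := Real.log_neg hδ0 hδ1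
      rw [hLq]; linarith
    have hεpos : 0 < ε := by
      rw [hε]
      refine mul_pos hσpos (Real.sqrt_pos.2 ?_)
      have hn0 : (0:ℝ) < n := by exact_mod_cast hnpos
      positivity
    set r := k - k/2 with hr
    set A : Fin k → Set ℝ := fun _ => {x : ℝ | ε < |(↑m : ℝ)⁻¹ * x - μ|} with hA
    have hAmeas : ∀ j, MeasurableSet (A j) := by
      intro j
      have hmble : Measurable fun x : ℝ => |(↑m : ℝ)⁻¹ * x - μ| :=
        ((measurable_id.const_mul _).sub_const μ).abs
      exact measurableSet_lt measurable_const hmble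
    have hone8 : ∀ j0 : ℕ,
        P {ω | ε < |(↑m : ℝ)⁻¹ * ∑ i ∈ Finset.range m, X (j0 * m + i) ω - μ|} ≤
          ENNReal.ofReal (1/8 : ℝ) := by
      intro j0
      refine le_trans (block_cheb P X hindep hident hmeas hL2 μ σ hmean hvar m hmpos j0 ε hεpos) ?_
      apply ENNReal.ofReal_le_ofReal
      have hε2 : ε^2 = σ^2 * (40 * Real.log (Real.exp 1 / δ) / n) := by
        have hn0 : (0:ℝ) < n := by exact_mod_cast hnpos
        rw [hε, mul_pow, Real.sq_sqrt (by positivity)]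
      have hkLq : (k:ℝ) ≤ 5 * Real.log (Real.exp 1 / δ) := by
        rw [hk]; push_cast
        have hceil : (⌈Real.log (1/δ)⌉₊ : ℝ) < Real.log (1/δ) + 1 :=
          Nat.ceil_lt_add_one hL0.le
        rw [hLq]; linarith [hceil, hlogδ]
      have hn' : (n:ℝ) = (k:ℝ) * m := by rw [hn]; push_cast; ring
      have hk0 : (0:ℝ) < k := by exact_mod_cast hkpos
      have hm0 : (0:ℝ) < m := by exact_mod_cast hmpos
      rw [div_le_iff₀ (by positivity)]
      have h1 : ((m:ℝ) * ε)^2 = (m:ℝ)^2 * ε^2 := by ring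
      rw [h1, hε2, hn']
      have h2 : (m:ℝ)^2 * (σ^2 * (40 * Real.log (Real.exp 1 / δ) / ((k:ℝ) * m))) =
          (m:ℝ) * σ^2 * (40 * Real.log (Real.exp 1 / δ) / (k:ℝ)) := by
        field_simp
      rw [h2]
      have hσ2 : (0:ℝ) < σ^2 := by positivity
      rw [show (1:ℝ)/8 * ((m:ℝ) * σ^2 * (40 * Real.log (Real.exp 1 / δ) / (k:ℝ))) =
          (m:ℝ) * σ^2 * (5 * Real.log (Real.exp 1 / δ) / (k:ℝ)) by ring]
      have h3 : (1:ℝ) ≤ 5 * Real.log (Real.exp 1 / δ) / (k:ℝ) :=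
        (one_le_div hk0).2 hkLq
      nlinarith [mul_pos hm0 hσ2]
    have hsubset : {ω | ε < |medianOf (fun j : Fin k =>
          (↑m : ℝ)⁻¹ * ∑ i ∈ Finset.range m, X (j.1 * m + i) ω) - μ|} ⊆
        ⋃ S ∈ Finset.powersetCard r (Finset.univ : Finset (Fin k)),
          ⋂ j ∈ S, {ω | (∑ i ∈ Finset.range m, X (j.1 * m + i) ω) ∈ A j} := by
      intro ω hω
      have hcard := card_bad_of_median hkpos
        (fun j : Fin k => (↑m : ℝ)⁻¹ * ∑ i ∈ Finset.range m, X (j.1 * m + i) ω) μ ε hω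
      obtain ⟨S, hSsub, hScard⟩ := Finset.exists_subset_card_eq hcard
      refine Set.mem_iUnion₂.2 ⟨S, Finset.mem_powersetCard.2 ⟨Finset.subset_univ S, hScard⟩, ?_⟩
      refine Set.mem_iInter₂.2 fun j hj => ?_
      have hjf := hSsub hj
      rw [Finset.mem_filter] at hjf
      exact hjf.2
    have hPGc : P {ω | ε < |medianOf (fun j : Fin k =>
          (↑m : ℝ)⁻¹ * ∑ i ∈ Finset.range m, X (j.1 * m + i) ω) - μ|} ≤ ENNReal.ofReal δ := by
      refine le_trans (measure_mono hsubset) ?_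
      refine le_trans (measure_biUnion_finset_le _ _) ?_
      have hprod : ∀ S ∈ Finset.powersetCard r (Finset.univ : Finset (Fin k)),
          P (⋂ j ∈ S, {ω | (∑ i ∈ Finset.range m, X (j.1 * m + i) ω) ∈ A j}) ≤
            ENNReal.ofReal (1/8 : ℝ) ^ r := by
        intro S hS
        rw [block_inter_prod P X hindep hmeas m k A hAmeas S]
        obtain ⟨-, hScard⟩ := Finset.mem_powersetCard.1 hS
        calc ∏ j ∈ S, P {ω | (∑ i ∈ Finset.range m, X (j.1 * m + i) ω) ∈ A j}
            ≤ ∏ _j ∈ S, ENNReal.ofReal (1/8 : ℝ) :=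
              Finset.prod_le_prod' fun j _ => hone8 j.1
        _ = ENNReal.ofReal (1/8 : ℝ) ^ r := by rw [Finset.prod_const, hScard]
      refine le_trans (Finset.sum_le_sum hprod) ?_
      rw [Finset.sum_const, Finset.card_powersetCard, Finset.card_univ, Fintype.card_fin,
        nsmul_eq_mul]
      rw [← ENNReal.ofReal_pow (by norm_num : (0:ℝ) ≤ 1/8)]
      rw [← ENNReal.ofReal_natCast (k.choose r), ← ENNReal.ofReal_mul (by positivity)]
      exact ENNReal.ofReal_le_ofReal (choose_bound δ hδ0 hδ1 k r hk hr)
    have hwrap : (1:ENNReal) ≤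
        P {ω | |medianOf (fun j : Fin k =>
          (↑m : ℝ)⁻¹ * ∑ i ∈ Finset.range m, X (j.1 * m + i) ω) - μ| ≤ ε} +
        P {ω | ε < |medianOf (fun j : Fin k =>
          (↑m : ℝ)⁻¹ * ∑ i ∈ Finset.range m, X (j.1 * m + i) ω) - μ|} := by
      calc (1:ENNReal) = P Set.univ := measure_univ.symm
      _ ≤ P ({ω | |medianOf (fun j : Fin k =>
          (↑m : ℝ)⁻¹ * ∑ i ∈ Finset.range m, X (j.1 * m + i) ω) - μ| ≤ ε} ∪
          {ω | ε < |medianOf (fun j : Fin k =>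
          (↑m : ℝ)⁻¹ * ∑ i ∈ Finset.range m, X (j.1 * m + i) ω) - μ|}) := by
        refine measure_mono fun ω _ => ?_
        rcases le_or_gt |medianOf (fun j : Fin k =>
          (↑m : ℝ)⁻¹ * ∑ i ∈ Finset.range m, X (j.1 * m + i) ω) - μ| ε with h | h
        · exact Or.inl h
        · exact Or.inr h
      _ ≤ _ := measure_union_le _ _
    have hfinal : ENNReal.ofReal (1 - δ) = 1 - ENNReal.ofReal δ := by
      rw [ENNReal.ofReal_sub _ hδ0.le, ENNReal.ofReal_one]
    rw [hfinal, tsub_le_iff_right]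
    exact le_trans hwrap (add_le_add_right hPGc _)
end
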